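/- For every nonnegative integer r, every n ∈ {2, …, N} and every f ∈ ℂ^N, the best approximation error satisfies E_n(f) ≤ (4/π)(r+3)^r (r+1) · ω_r(f, λ_n^{−1/2}). -/

import Mathlib

open Matrix

noncomputable section

/-- Euclidean (2-)norm on `ℂ^N`. -/
def cnorm2 {N : ℕ} (f : Fin N → ℂ) : ℝ := Real.sqrt (∑ i, ‖f i‖ ^ 2)

/-- The spectral operator `Σ_j c_j u_j u_j^*`. -/
def specOp {N : ℕ} (u : Fin N → Fin N → ℂ) (c : Fin N → ℂ) : Matrix (Fin N) (Fin N) ℂ :=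
  ∑ j, c j • Matrix.vecMulVec (u j) (star (u j))

/-- The graph translation operator `T_s = Σ_j e^{i s √λ_j} u_j u_j^*`. -/
def Tmat {N : ℕ} (u : Fin N → Fin N → ℂ) (lam : Fin N → ℝ) (s : ℝ) :
    Matrix (Fin N) (Fin N) ℂ :=
  specOp u (fun j => Complex.exp (Complex.I * (s : ℂ) * (Real.sqrt (lam j) : ℂ)))

/-- The `r`-th modulus of smoothness `ω_r(f,t) = sup_{|s| ≤ t} ‖(T_s - I)^r f‖₂`. -/
def omegaMod {N : ℕ} (u : Fin N → Fin N → ℂ) (lam : Fin N → ℝ) (r : ℕ) (f : Fin N → ℂ)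
    (t : ℝ) : ℝ :=
  ⨆ s : {s : ℝ // |s| ≤ t}, cnorm2 (((Tmat u lam s.1 - 1) ^ r).mulVec f)

/-- The Paley–Wiener space `PW_{λ_n} = span(u_1, …, u_n)`. -/
def PWspace {N : ℕ} (u : Fin N → Fin N → ℂ) (n : ℕ) : Submodule ℂ (Fin N → ℂ) :=
  Submodule.span ℂ {g | ∃ j : Fin N, (j : ℕ) < n ∧ g = u j}

/-- The best approximation error `E_n(f) = min_{g ∈ PW_{λ_n}} ‖f - g‖₂`. -/
def bestErr {N : ℕ} (u : Fin N → Fin N → ℂ) (n : ℕ) (f : Fin N → ℂ) : ℝ :=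
  sInf {y : ℝ | ∃ g ∈ PWspace u n, y = cnorm2 (f - g)}

/-! Expand `f` in the eigenbasis, `c_j = ⟨u_j, f⟩`. Projecting onto `PW_{λ_n}` gives
`E_n(f)² ≤ ∑_{j > n} |c_j|²`, while `‖(T_s - I)^r f‖² = ∑_j (4 sin²(s √λ_j / 2))^r |c_j|²`.
Averaging the latter over `s ∈ [0, t]`, `t = λ_n^{-1/2}`, the angle `s √λ_j / 2` of each mode
`j > n` sweeps an interval of length at least `1/2`, so on average the mode keeps the fraction
`sinSqPowMeanBound r` of its energy; hence `sinSqPowMeanBound r · E_n(f)² ≤ ω_r(f, t)²`, and the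
stated constant `C` satisfies `sinSqPowMeanBound r · C² ≥ 1` for `r ≥ 1`. For `r = 0`, simply
`E_n(f) ≤ ‖f‖ = ω_0(f, t)`. In the code, indices start at `0`, so `λ_n` is `lam ⟨n - 1, _⟩` and the
modes `j > n` are those with `n ≤ (j : ℕ)`. -/

open Real

section SinPowerMeans

def sinSqPowMeanBound (r : ℕ) : ℝ := (15 / 16) ^ (2 * r) / (4 * π * (2 * r + 1))

lemma sin_sq_pow_periodic (r : ℕ) : Function.Periodic (fun θ => (4 * sin θ ^ 2) ^ r) π := by
  intro θ
  simp [sin_add_pi]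

lemma intervalIntegrable_sin_sq_pow (r : ℕ) (a b : ℝ) :
    IntervalIntegrable (fun θ => (4 * sin θ ^ 2) ^ r) MeasureTheory.volume a b :=
  (by fun_prop : Continuous fun θ => (4 * sin θ ^ 2) ^ r).intervalIntegrable a b

lemma integral_sin_sq_pow_mono (r : ℕ) {a b : ℝ} (ha : 0 ≤ a) (hab : a ≤ b) :
    ∫ θ in 0..a, (4 * sin θ ^ 2) ^ r ≤ ∫ θ in 0..b, (4 * sin θ ^ 2) ^ r :=
  intervalIntegral.integral_mono_interval le_rfl ha hab (.of_forall fun θ => by positivity)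
    (intervalIntegrable_sin_sq_pow r 0 b)

/-- On `[0, 1/2]` the bound `sin θ ≥ θ - θ³/6 ≥ 15θ/16` makes the integrand at least
`(15θ/8)^(2r)`. -/
lemma integral_sin_sq_pow_half_ge (r : ℕ) :
    (15 / 16 : ℝ) ^ (2 * r) / (2 * (2 * r + 1)) ≤ ∫ θ in 0..(1 / 2), (4 * sin θ ^ 2) ^ r := by
  have hpoly : ∫ θ in 0..(1 / 2), (15 / 8 * θ) ^ (2 * r) =
      (15 / 16 : ℝ) ^ (2 * r) / (2 * (2 * r + 1)) := by
    have h : (15 / 8 : ℝ) ^ (2 * r) * (1 / 2) ^ (2 * r) = (15 / 16) ^ (2 * r) := by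
      rw [← mul_pow]; norm_num
    simp only [mul_pow, intervalIntegral.integral_const_mul, integral_pow]
    rw [zero_pow (by omega), sub_zero, pow_succ, ← h]
    push_cast
    field_simp
  rw [← hpoly]
  refine intervalIntegral.integral_mono_on (by norm_num)
    (Continuous.intervalIntegrable (by fun_prop) _ _) (intervalIntegrable_sin_sq_pow r _ _)
    fun θ ⟨h0, h1⟩ => ?_
  have hsin : 15 / 16 * θ ≤ sin θ := by
    rcases h0.eq_or_lt with rfl | hpos
    · simp
    · have hθ3 : θ * (θ * θ) ≤ θ * (1 / 2 * (1 / 2)) :=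
        mul_le_mul_of_nonneg_left (mul_le_mul h1 h1 h0 (by norm_num)) h0
      nlinarith [sin_gt_sub_cube hpos]
  rw [pow_mul]
  gcongr
  nlinarith

lemma integral_sin_sq_pow_ge (r : ℕ) {a : ℝ} (ha : 1 / 2 ≤ a) :
    sinSqPowMeanBound r * a ≤ ∫ θ in 0..a, (4 * sin θ ^ 2) ^ r := by
  set β : ℝ := (15 / 16 : ℝ) ^ (2 * r) / (2 * (2 * r + 1))
  set m : ℕ := ⌊a / π⌋₊
  have hβ : β ≤ ∫ θ in 0..a, (4 * sin θ ^ 2) ^ r :=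
    (integral_sin_sq_pow_half_ge r).trans (integral_sin_sq_pow_mono r (by norm_num) ha)
  have hmβ : m * β ≤ ∫ θ in 0..a, (4 * sin θ ^ 2) ^ r := by
    have hperiod := (sin_sq_pow_periodic r).intervalIntegral_add_zsmul_eq m 0
      (intervalIntegrable_sin_sq_pow r)
    simp only [zero_add, Int.cast_natCast, zsmul_eq_mul] at hperiod
    calc (m : ℝ) * β
        ≤ m * ∫ θ in 0..π, (4 * sin θ ^ 2) ^ r := by
          gcongr
          exact (integral_sin_sq_pow_half_ge r).trans
            (integral_sin_sq_pow_mono r (by norm_num) (by linarith [pi_gt_three]))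
      _ = ∫ θ in 0..(m * π), (4 * sin θ ^ 2) ^ r := hperiod.symm
      _ ≤ _ := integral_sin_sq_pow_mono r (by positivity)
          ((le_div_iff₀ pi_pos).1 (Nat.floor_le (by positivity)))
  have hm : a / π < m + 1 := Nat.lt_floor_add_one _
  have hκ : sinSqPowMeanBound r = β / (2 * π) := by
    simp only [sinSqPowMeanBound, β]
    field_simp
    ring
  -- `max 1 m` periods fit into `[0, a]`, and `max 1 m ≥ (m + 1) / 2 > a / (2π)`.
  rw [hκ, div_mul_eq_mul_div, div_le_iff₀ (by positivity)]
  rw [div_lt_iff₀ pi_pos] at hm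
  have hβpos : 0 < β := by positivity
  nlinarith

lemma integral_sin_sq_mul_pow_ge (r : ℕ) {t x : ℝ} (ht : 0 < t) (hx : t⁻¹ ≤ x) :
    sinSqPowMeanBound r * t ≤ ∫ s in 0..t, (4 * sin (s * x / 2) ^ 2) ^ r := by
  have hx0 : 0 < x := (inv_pos.2 ht).trans_le hx
  have hsubst := intervalIntegral.integral_comp_mul_right
    (fun θ => (4 * sin θ ^ 2) ^ r) (c := x / 2) (by positivity) (a := 0) (b := t)
  simp only [zero_mul, mul_div_assoc] at hsubst ⊢
  rw [hsubst, smul_eq_mul]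
  have hhalf : 1 / 2 ≤ t * (x / 2) := by
    rw [inv_le_iff_one_le_mul₀ ht] at hx
    linarith
  calc sinSqPowMeanBound r * t = (x / 2)⁻¹ * (sinSqPowMeanBound r * (t * (x / 2))) := by
        field_simp
    _ ≤ _ := by gcongr; exact integral_sin_sq_pow_ge r hhalf

lemma one_le_sinSqPowMeanBound_mul_sq {r : ℕ} (hr : 1 ≤ r) :
    1 ≤ sinSqPowMeanBound r * (4 / π * ((r : ℝ) + 3) ^ r * ((r : ℝ) + 1)) ^ 2 := by
  have hr' : (1 : ℝ) ≤ r := by exact_mod_cast hr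
  have hX : 14 ≤ (15 / 16 * ((r : ℝ) + 3)) ^ (2 * r) :=
    calc (14 : ℝ) ≤ 14 ^ r := le_self_pow₀ (by norm_num) (by omega)
      _ ≤ ((15 / 16 * ((r : ℝ) + 3)) ^ 2) ^ r := by gcongr; nlinarith
      _ = _ := by rw [← pow_mul, mul_comm 2]
  have hπ3 : π ^ 3 < 32 := by
    calc π ^ 3 < 3.15 ^ 3 := by gcongr; exact pi_lt_d2
      _ < 32 := by norm_num
  have hexpand : sinSqPowMeanBound r * (4 / π * ((r : ℝ) + 3) ^ r * ((r : ℝ) + 1)) ^ 2 =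
      4 * (15 / 16 * ((r : ℝ) + 3)) ^ (2 * r) * (r + 1) ^ 2 / (π ^ 3 * (2 * r + 1)) := by
    rw [sinSqPowMeanBound, mul_pow _ ((r : ℝ) + 3), pow_mul' ((r : ℝ) + 3)]
    field_simp
  rw [hexpand, one_le_div (by positivity)]
  nlinarith [mul_le_mul_of_nonneg_right hX (sq_nonneg ((r : ℝ) + 1))]

end SinPowerMeans

section SpectralCalculus

variable {N : ℕ} {u : Fin N → Fin N → ℂ}

lemma specOp_mulVec (c f : Fin N → ℂ) :
    specOp u c *ᵥ f = ∑ j, (c j * (star (u j) ⬝ᵥ f)) • u j := by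
  simp [specOp, Matrix.sum_mulVec, Matrix.smul_mulVec, vecMulVec_mulVec, smul_smul]

lemma specOp_sub (c d : Fin N → ℂ) : specOp u (c - d) = specOp u c - specOp u d := by
  simp [specOp, sub_smul, Finset.sum_sub_distrib]

lemma specOp_mul (hu : ∀ i j, star (u i) ⬝ᵥ u j = if i = j then 1 else 0)
    (c d : Fin N → ℂ) : specOp u c * specOp u d = specOp u (c * d) := by
  simp only [specOp, Finset.sum_mul, Finset.mul_sum, Matrix.smul_mul, Matrix.mul_smul,
    vecMulVec_mul_vecMulVec, vecMulVec_smul, hu]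
  simp [smul_smul, mul_comm]

lemma specOp_one (hu : ∀ i j, star (u i) ⬝ᵥ u j = if i = j then 1 else 0) :
    specOp u 1 = 1 := by
  set U : Matrix (Fin N) (Fin N) ℂ := Matrix.of fun i j => u j i
  have hUU : Uᴴ * U = 1 := by
    ext i j
    simpa [U, Matrix.mul_apply, dotProduct, Matrix.one_apply] using hu i j
  rw [← mul_eq_one_comm.mp hUU]
  ext i j
  simp [U, specOp, Matrix.mul_apply, Matrix.sum_apply, vecMulVec_apply]

lemma specOp_pow (hu : ∀ i j, star (u i) ⬝ᵥ u j = if i = j then 1 else 0)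
    (c : Fin N → ℂ) (r : ℕ) : specOp u c ^ r = specOp u (c ^ r) := by
  induction r with
  | zero => exact (specOp_one hu).symm
  | succ r ih => rw [pow_succ, ih, specOp_mul hu, pow_succ]

lemma cnorm2_nonneg (g : Fin N → ℂ) : 0 ≤ cnorm2 g := Real.sqrt_nonneg _

lemma cnorm2_sq (g : Fin N → ℂ) : cnorm2 g ^ 2 = (star g ⬝ᵥ g).re := by
  rw [cnorm2, Real.sq_sqrt (by positivity)]
  simp [dotProduct, Complex.re_sum, Complex.sq_norm, Complex.normSq_apply]

lemma cnorm2_sum_smul_sq (hu : ∀ i j, star (u i) ⬝ᵥ u j = if i = j then 1 else 0)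
    (a : Fin N → ℂ) : cnorm2 (∑ j, a j • u j) ^ 2 = ∑ j, ‖a j‖ ^ 2 := by
  rw [cnorm2_sq]
  simp [star_sum, sum_dotProduct, dotProduct_sum, hu, Complex.re_sum, Complex.sq_norm,
    Complex.normSq_apply]

lemma cnorm2_specOp_mulVec_sq (hu : ∀ i j, star (u i) ⬝ᵥ u j = if i = j then 1 else 0)
    (c f : Fin N → ℂ) :
    cnorm2 (specOp u c *ᵥ f) ^ 2 = ∑ j, ‖c j‖ ^ 2 * ‖star (u j) ⬝ᵥ f‖ ^ 2 := by
  simp [specOp_mulVec, cnorm2_sum_smul_sq hu, mul_pow]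

lemma cnorm2_sq_eq_sum_sq_dotProduct (hu : ∀ i j, star (u i) ⬝ᵥ u j = if i = j then 1 else 0)
    (f : Fin N → ℂ) : cnorm2 f ^ 2 = ∑ j, ‖star (u j) ⬝ᵥ f‖ ^ 2 := by
  simpa [specOp_one hu] using cnorm2_specOp_mulVec_sq hu 1 f

lemma Tmat_sub_one_pow (hu : ∀ i j, star (u i) ⬝ᵥ u j = if i = j then 1 else 0)
    (lam : Fin N → ℝ) (s : ℝ) (r : ℕ) :
    (Tmat u lam s - 1) ^ r =
      specOp u fun j => (Complex.exp (Complex.I * s * √(lam j)) - 1) ^ r := by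
  rw [Tmat, ← specOp_one hu, ← specOp_sub, specOp_pow hu]
  rfl

lemma norm_cexp_I_mul_sub_one_pow_sq (s x : ℝ) (r : ℕ) :
    ‖(Complex.exp (Complex.I * s * x) - 1) ^ r‖ ^ 2 = (4 * sin (s * x / 2) ^ 2) ^ r := by
  rw [norm_pow, ← pow_mul, mul_comm r, pow_mul, mul_assoc, ← Complex.ofReal_mul,
    Complex.norm_exp_I_mul_ofReal_sub_one]
  norm_num [mul_pow]

lemma cnorm2_Tmat_sub_one_pow_mulVec_sq (hu : ∀ i j, star (u i) ⬝ᵥ u j = if i = j then 1 else 0)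
    (lam : Fin N → ℝ) (s : ℝ) (r : ℕ) (f : Fin N → ℂ) :
    cnorm2 ((Tmat u lam s - 1) ^ r *ᵥ f) ^ 2 =
      ∑ j, (4 * sin (s * √(lam j) / 2) ^ 2) ^ r * ‖star (u j) ⬝ᵥ f‖ ^ 2 := by
  simp only [Tmat_sub_one_pow hu, cnorm2_specOp_mulVec_sq hu, norm_cexp_I_mul_sub_one_pow_sq]

end SpectralCalculus

section ApproximationBounds

variable {N : ℕ} {u : Fin N → Fin N → ℂ}

lemma le_omegaMod (hu : ∀ i j, star (u i) ⬝ᵥ u j = if i = j then 1 else 0)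
    (lam : Fin N → ℝ) (r : ℕ) (f : Fin N → ℂ) {s t : ℝ} (hs : |s| ≤ t) :
    cnorm2 ((Tmat u lam s - 1) ^ r *ᵥ f) ≤ omegaMod u lam r f t := by
  refine le_ciSup (f := fun s : {s : ℝ // |s| ≤ t} => cnorm2 ((Tmat u lam s - 1) ^ r *ᵥ f))
    ⟨√(∑ j, 4 ^ r * ‖star (u j) ⬝ᵥ f‖ ^ 2), ?_⟩ ⟨s, hs⟩
  rintro _ ⟨s, rfl⟩
  refine Real.le_sqrt_of_sq_le ?_
  rw [cnorm2_Tmat_sub_one_pow_mulVec_sq hu]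
  gcongr with j
  nlinarith [sin_sq_le_one (s * √(lam j) / 2)]

lemma bestErr_le_sqrt_sum (hu : ∀ i j, star (u i) ⬝ᵥ u j = if i = j then 1 else 0)
    (n : ℕ) (f : Fin N → ℂ) :
    bestErr u n f ≤ √(∑ j ∈ {j : Fin N | n ≤ (j : ℕ)}, ‖star (u j) ⬝ᵥ f‖ ^ 2) := by
  set τ : Fin N → ℂ := fun j => if n ≤ (j : ℕ) then 1 else 0
  have hmem : specOp u (1 - τ) *ᵥ f ∈ PWspace u n := by
    rw [specOp_mulVec]
    refine Submodule.sum_mem _ fun j _ => ?_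
    by_cases h : n ≤ (j : ℕ)
    · simp [τ, h]
    · exact Submodule.smul_mem _ _ (Submodule.subset_span ⟨j, by omega, rfl⟩)
  have hdiff : f - specOp u (1 - τ) *ᵥ f = specOp u τ *ᵥ f := by
    rw [specOp_sub, specOp_one hu, Matrix.sub_mulVec, Matrix.one_mulVec, sub_sub_cancel]
  have hbdd : BddBelow {y | ∃ g ∈ PWspace u n, y = cnorm2 (f - g)} :=
    ⟨0, by rintro _ ⟨g, -, rfl⟩; exact cnorm2_nonneg _⟩
  calc bestErr u n f ≤ cnorm2 (f - specOp u (1 - τ) *ᵥ f) := csInf_le hbdd ⟨_, hmem, rfl⟩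
    _ = √(cnorm2 (specOp u τ *ᵥ f) ^ 2) := by rw [hdiff, Real.sqrt_sq (cnorm2_nonneg _)]
    _ = _ := by
      rw [cnorm2_specOp_mulVec_sq hu, Finset.sum_filter]
      congr 1
      refine Finset.sum_congr rfl fun j _ => ?_
      by_cases h : n ≤ (j : ℕ) <;> simp [τ, h]

lemma sinSqPowMeanBound_mul_sum_le_omegaMod_sq
    (hu : ∀ i j, star (u i) ⬝ᵥ u j = if i = j then 1 else 0)
    (lam : Fin N → ℝ) (r : ℕ) (f : Fin N → ℂ) {t : ℝ} (ht : 0 < t) (A : Finset (Fin N))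
    (hA : ∀ j ∈ A, t⁻¹ ≤ √(lam j)) :
    sinSqPowMeanBound r * ∑ j ∈ A, ‖star (u j) ⬝ᵥ f‖ ^ 2 ≤ omegaMod u lam r f t ^ 2 := by
  set w : Fin N → ℝ → ℝ :=
    fun j s => (4 * sin (s * √(lam j) / 2) ^ 2) ^ r * ‖star (u j) ⬝ᵥ f‖ ^ 2
  have hw_cont : ∀ j, Continuous (w j) := fun j => by fun_prop
  have hmode : ∀ j ∈ A,
      t * (sinSqPowMeanBound r * ‖star (u j) ⬝ᵥ f‖ ^ 2) ≤ ∫ s in 0..t, w j s := by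
    intro j hj
    rw [intervalIntegral.integral_mul_const, ← mul_assoc, mul_comm t]
    gcongr
    exact integral_sin_sq_mul_pow_ge r ht (hA j hj)
  have hsup : ∀ s ∈ Set.Icc 0 t, ∑ j, w j s ≤ omegaMod u lam r f t ^ 2 := by
    intro s hs
    rw [← cnorm2_Tmat_sub_one_pow_mulVec_sq hu]
    gcongr
    · exact cnorm2_nonneg _
    · exact le_omegaMod hu lam r f (abs_le.2 ⟨by linarith [hs.1], hs.2⟩)
  refine le_of_mul_le_mul_left ?_ ht
  calc t * (sinSqPowMeanBound r * ∑ j ∈ A, ‖star (u j) ⬝ᵥ f‖ ^ 2)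
      = ∑ j ∈ A, t * (sinSqPowMeanBound r * ‖star (u j) ⬝ᵥ f‖ ^ 2) := by
        rw [Finset.mul_sum, Finset.mul_sum]
    _ ≤ ∑ j ∈ A, ∫ s in 0..t, w j s := Finset.sum_le_sum hmode
    _ ≤ ∑ j, ∫ s in 0..t, w j s :=
        Finset.sum_le_sum_of_subset_of_nonneg (Finset.subset_univ A) fun j _ _ =>
          intervalIntegral.integral_nonneg ht.le fun s _ => by positivity
    _ = ∫ s in 0..t, ∑ j, w j s := (intervalIntegral.integral_finsetSum fun j _ =>
          (hw_cont j).intervalIntegrable _ _).symm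
    _ ≤ ∫ _ in 0..t, omegaMod u lam r f t ^ 2 :=
        intervalIntegral.integral_mono_on ht.le
          ((continuous_finsetSum _ fun j _ => hw_cont j).intervalIntegrable _ _)
          intervalIntegrable_const hsup
    _ = t * omegaMod u lam r f t ^ 2 := by simp

lemma omegaMod_nonneg (u : Fin N → Fin N → ℂ) (lam : Fin N → ℝ) (r : ℕ)
    (f : Fin N → ℂ) (t : ℝ) : 0 ≤ omegaMod u lam r f t :=
  Real.iSup_nonneg fun _ => cnorm2_nonneg _

lemma sum_le_sq_mul_omegaMod (hu : ∀ i j, star (u i) ⬝ᵥ u j = if i = j then 1 else 0)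
    (lam : Fin N → ℝ) (r : ℕ) (f : Fin N → ℂ) {t : ℝ} (ht : 0 < t) (A : Finset (Fin N))
    (hA : ∀ j ∈ A, t⁻¹ ≤ √(lam j)) :
    ∑ j ∈ A, ‖star (u j) ⬝ᵥ f‖ ^ 2 ≤
      (4 / π * ((r : ℝ) + 3) ^ r * ((r : ℝ) + 1) * omegaMod u lam r f t) ^ 2 := by
  rcases r.eq_zero_or_pos with rfl | hr
  · have hf : cnorm2 f ≤ omegaMod u lam 0 f t := by
      simpa using le_omegaMod hu lam 0 f (s := 0) (by simpa using ht.le)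
    have hC : 1 ≤ 4 / π * ((0 : ℕ) + 3 : ℝ) ^ 0 * ((0 : ℕ) + 1 : ℝ) := by
      rw [pow_zero, Nat.cast_zero, zero_add, mul_one, mul_one, one_le_div₀ pi_pos]
      exact pi_le_four
    calc ∑ j ∈ A, ‖star (u j) ⬝ᵥ f‖ ^ 2 ≤ cnorm2 f ^ 2 := by
          rw [cnorm2_sq_eq_sum_sq_dotProduct hu]
          exact Finset.sum_le_sum_of_subset_of_nonneg (Finset.subset_univ _)
            fun j _ _ => by positivity
      _ ≤ omegaMod u lam 0 f t ^ 2 := by gcongr; exact cnorm2_nonneg f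
      _ ≤ _ := by rw [mul_pow]; exact le_mul_of_one_le_left (by positivity) (one_le_pow₀ hC)
  · have hmean := sinSqPowMeanBound_mul_sum_le_omegaMod_sq hu lam r f ht A hA
    have hconst := one_le_sinSqPowMeanBound_mul_sq hr
    have hsum : 0 ≤ ∑ j ∈ A, ‖star (u j) ⬝ᵥ f‖ ^ 2 := by positivity
    nlinarith

end ApproximationBounds

theorem stmt0
    (N : ℕ) (hN : 2 ≤ N)
    (u : Fin N → Fin N → ℂ)
    (hu : ∀ i j, star (u i) ⬝ᵥ u j = if i = j then 1 else 0)
    (lam : Fin N → ℝ) (hmono : Monotone lam)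
    (hlam1 : 0 < lam ⟨1, by omega⟩)
    (r : ℕ) (n : ℕ) (hn2 : 2 ≤ n) (hnN : n ≤ N) (f : Fin N → ℂ) :
    bestErr u n f ≤
      (4 / Real.pi) * ((r : ℝ) + 3) ^ r * ((r : ℝ) + 1) *
        omegaMod u lam r f (lam ⟨n - 1, by omega⟩ ^ (-(1 : ℝ) / 2)) := by
  set t := lam ⟨n - 1, by omega⟩ ^ (-(1 : ℝ) / 2)
  set A : Finset (Fin N) := {j | n ≤ (j : ℕ)}
  have hlam : 0 < lam ⟨n - 1, by omega⟩ := hlam1.trans_le (hmono (Fin.mk_le_mk.2 (by omega)))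
  have hfreq : ∀ j ∈ A, t⁻¹ ≤ √(lam j) := by
    intro j hj
    have hj' : lam ⟨n - 1, by omega⟩ ≤ lam j :=
      hmono (Fin.mk_le_of_le_val (by simp only [A, Finset.mem_filter] at hj; omega))
    rw [← rpow_neg hlam.le, neg_div, neg_neg, sqrt_eq_rpow]
    exact rpow_le_rpow hlam.le hj' (by norm_num)
  have hsum := sum_le_sq_mul_omegaMod hu lam r f (rpow_pos_of_pos hlam _) A hfreq
  exact (bestErr_le_sqrt_sum hu n f).trans
    (Real.sqrt_le_iff.2 ⟨mul_nonneg (by positivity) (omegaMod_nonneg u lam r f t), hsum⟩)
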